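/- arXiv:2004.02823 — 2 statements merged into one kernel-verified Lean document; each statement's English description precedes it below -/
import Mathlib

section
/- Let f : ℝᵈ → ℝ be continuously differentiable, non-negative, and (m,b)-dissipative, i.e. ⟨x, ∇f(x)⟩ ≥ m‖x‖² - b for all x, with m > 0, b ≥ 0. Then for every c ∈ (0,1) and all x ∈ ℝᵈ, f(x) ≥ (m(1-c²)/2)‖x‖² + b·log c. In particular, taking c = 1/√3, f(x) ≥ (m/3)‖x‖² - (b/2)·log 3. -/
open RealInnerProductSpace

/-!
Along the ray `t ↦ t • x`, dissipativity at `t • x` gives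
`d/dt f(t • x) = ⟪x, ∇f(t • x)⟫ ≥ m t ‖x‖² - b / t` for `t > 0`, so
`t ↦ f(t • x) - (m t² ‖x‖² / 2 - b log t)` is monotone on `(0, ∞)`.
Comparing `t = c` with `t = 1` and using `f(c • x) ≥ 0` gives the bound;
`c = 1/√3` gives the special case.
-/

section Dissipative

variable {E : Type*} [NormedAddCommGroup E] [InnerProductSpace ℝ E]

def IsDissipative (m b : ℝ) (g : E → E) : Prop :=
  ∀ x, m * ‖x‖ ^ 2 - b ≤ ⟪x, g x⟫

theorem IsDissipative.le_inner_smul {m b : ℝ} {g : E → E} (hg : IsDissipative m b g)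
    (x : E) {t : ℝ} (ht : 0 < t) : m * t * ‖x‖ ^ 2 - b / t ≤ ⟪x, g (t • x)⟫ := by
  have h := hg (t • x)
  rw [real_inner_smul_left, norm_smul, mul_pow, Real.norm_eq_abs, sq_abs] at h
  calc m * t * ‖x‖ ^ 2 - b / t = (m * (t ^ 2 * ‖x‖ ^ 2) - b) / t := by field_simp
    _ ≤ t * ⟪x, g (t • x)⟫ / t := by gcongr
    _ = ⟪x, g (t • x)⟫ := by field_simp

variable [CompleteSpace E]

theorem hasDerivAt_comp_smul_const {f : E → ℝ} {x : E} {t : ℝ}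
    (hf : DifferentiableAt ℝ f (t • x)) :
    HasDerivAt (fun s : ℝ => f (s • x)) ⟪x, gradient f (t • x)⟫ t := by
  have h := hf.hasFDerivAt.comp_hasDerivAt t ((hasDerivAt_id t).smul_const x)
  rw [one_smul] at h
  rw [inner_gradient_right]
  exact h

theorem monotoneOn_sub_of_isDissipative_gradient {f : E → ℝ} {m b : ℝ}
    (hf : Differentiable ℝ f) (hdiss : IsDissipative m b (gradient f)) (x : E) :
    MonotoneOn (fun t : ℝ => f (t • x) - (m / 2 * t ^ 2 * ‖x‖ ^ 2 - b * Real.log t))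
      (Set.Ioi 0) := by
  have hderiv : ∀ t ∈ Set.Ioi (0 : ℝ), HasDerivAt
      (fun t : ℝ => f (t • x) - (m / 2 * t ^ 2 * ‖x‖ ^ 2 - b * Real.log t))
      (⟪x, gradient f (t • x)⟫ - (m * t * ‖x‖ ^ 2 - b / t)) t := by
    intro t ht
    have ht0 : t ≠ 0 := ht.ne'
    have hpoly := ((hasDerivAt_pow 2 t).const_mul (m / 2)).mul_const (‖x‖ ^ 2)
    have hlog := (Real.hasDerivAt_log ht0).const_mul b
    refine ((hasDerivAt_comp_smul_const (hf _)).sub (hpoly.sub hlog)).congr_deriv ?_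
    field_simp
    ring
  refine monotoneOn_of_hasDerivWithinAt_nonneg (convex_Ioi 0)
    (f' := fun t => ⟪x, gradient f (t • x)⟫ - (m * t * ‖x‖ ^ 2 - b / t))
    (fun t ht => (hderiv t ht).continuousAt.continuousWithinAt) (fun t ht => ?_) fun t ht => ?_
  all_goals simp only [interior_Ioi] at ht ⊢
  · exact (hderiv t ht).hasDerivWithinAt
  · exact sub_nonneg.mpr (hdiss.le_inner_smul x ht)

theorem IsDissipative.le_apply_sub_apply_smul {f : E → ℝ} {m b : ℝ}
    (hf : Differentiable ℝ f) (hdiss : IsDissipative m b (gradient f)) (x : E) {c : ℝ}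
    (hc : 0 < c) (hc1 : c ≤ 1) :
    m * (1 - c ^ 2) / 2 * ‖x‖ ^ 2 + b * Real.log c ≤ f x - f (c • x) := by
  have h := monotoneOn_sub_of_isDissipative_gradient hf hdiss x hc (Set.mem_Ioi.mpr one_pos) hc1
  simp only [one_smul, one_pow, Real.log_one, mul_zero, sub_zero] at h
  linarith

end Dissipative

theorem dissipative_quadratic_lower_bound_general {d : ℕ} {f : EuclideanSpace ℝ (Fin d) → ℝ}
    {m b : ℝ} (hf : ContDiff ℝ 1 f)
    (hnonneg : ∀ x, 0 ≤ f x)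
    (hdiss : ∀ x : EuclideanSpace ℝ (Fin d), ⟪x, gradient f x⟫ ≥ m * ‖x‖ ^ 2 - b) :
    (∀ c : ℝ, 0 < c → c < 1 →
      ∀ x : EuclideanSpace ℝ (Fin d),
        f x ≥ m * (1 - c ^ 2) / 2 * ‖x‖ ^ 2 + b * Real.log c) ∧
      ∀ x : EuclideanSpace ℝ (Fin d),
        f x ≥ m / 3 * ‖x‖ ^ 2 - b / 2 * Real.log 3 := by
  have hdf : Differentiable ℝ f := hf.differentiable one_ne_zero
  have main : ∀ c : ℝ, 0 < c → c < 1 → ∀ x,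
      f x ≥ m * (1 - c ^ 2) / 2 * ‖x‖ ^ 2 + b * Real.log c := fun c hc hc1 x => by
      linarith [IsDissipative.le_apply_sub_apply_smul hdf hdiss x hc hc1.le, hnonneg (c • x)]
  refine ⟨main, fun x => ?_⟩
  have hsqrt : 1 < √3 := by rw [Real.lt_sqrt zero_le_one]; norm_num
  have hsq : (√3)⁻¹ ^ 2 = 1 / 3 := by rw [inv_pow, Real.sq_sqrt (by norm_num)]; norm_num
  have hlog : Real.log (√3)⁻¹ = -(Real.log 3 / 2) := by
    rw [Real.log_inv, Real.log_sqrt (by norm_num)]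
  have h := main _ (by positivity) (inv_lt_one_of_one_lt₀ hsqrt) x
  rw [hsq, hlog] at h
  linarith

/-- For a non-negative C¹ function `f` that is (m,b)-dissipative, for every `c ∈ (0,1)`
one has `f(x) ≥ (m(1-c²)/2)‖x‖² + b log c`; in particular (with `c = 1/√3`)
`f(x) ≥ (m/3)‖x‖² - (b/2) log 3`. -/
theorem dissipative_quadratic_lower_bound {d : ℕ} {f : EuclideanSpace ℝ (Fin d) → ℝ}
    {m b : ℝ} (hm : 0 < m) (hb : 0 ≤ b) (hf : ContDiff ℝ 1 f)
    (hnonneg : ∀ x, 0 ≤ f x)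
    (hdiss : ∀ x : EuclideanSpace ℝ (Fin d), ⟪x, gradient f x⟫ ≥ m * ‖x‖ ^ 2 - b) :
    (∀ c : ℝ, 0 < c → c < 1 →
      ∀ x : EuclideanSpace ℝ (Fin d),
        f x ≥ m * (1 - c ^ 2) / 2 * ‖x‖ ^ 2 + b * Real.log c) ∧
      ∀ x : EuclideanSpace ℝ (Fin d),
        f x ≥ m / 3 * ‖x‖ ^ 2 - b / 2 * Real.log 3 :=
  dissipative_quadratic_lower_bound_general hf hnonneg hdiss
end

section
/- Let F : ℝᵈ → ℝ be C² with M-Lipschitz gradient, let β > α > 0, and let L_J g = -⟨(I+J)∇F, ∇g⟩ + β⁻¹ Δg with J anti-symmetric. Then pointwise L_J(e^{αF}) ≤ αβ⁻¹ M d · e^{αF}. -/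
open RealInnerProductSpace

/-- The Laplacian of `g : ℝᵈ → ℝ`, as the sum of second partial derivatives. -/
noncomputable def laplacian {d : ℕ} (g : EuclideanSpace ℝ (Fin d) → ℝ)
    (x : EuclideanSpace ℝ (Fin d)) : ℝ :=
  ∑ i : Fin d,
    fderiv ℝ (fun y => fderiv ℝ g y (EuclideanSpace.single i 1)) x
      (EuclideanSpace.single i 1)

/-! By the chain rule, `∇e^{αF} = α e^{αF} ∇F` and `Δe^{αF} = e^{αF} (α ΔF + α² ‖∇F‖²)`. The skew part
`J` drops out of `⟪(1 + J) ∇F, ∇F⟫ = ‖∇F‖²`, so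
`L_J e^{αF} = e^{αF} (-α (1 - α/β) ‖∇F‖² + α β⁻¹ ΔF)`. The first term is nonpositive since `α < β`,
and `ΔF ≤ M d` because every diagonal entry of the Hessian is bounded by the Lipschitz constant `M`
of `∇F`. -/

section NormedSpace

variable {E G : Type*} [NormedAddCommGroup E] [NormedSpace ℝ E] [NormedAddCommGroup G]
  [NormedSpace ℝ G] {x : E}

theorem fderiv_fun_fderiv_apply {f : E → G} (hf : DifferentiableAt ℝ (fderiv ℝ f) x) (e v : E) :
    fderiv ℝ (fun y => fderiv ℝ f y e) x v = fderiv ℝ (fderiv ℝ f) x v e := by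
  rw [fderiv_clm_apply hf (differentiableAt_const e)]
  simp

theorem hasFDerivAt_fderiv_comp {F : E → ℝ} {φ φ' : ℝ → ℝ} {φ'' : ℝ}
    (hφ : ∀ t, HasDerivAt φ (φ' t) t) (hφ' : HasDerivAt φ' φ'' (F x))
    (hF : Differentiable ℝ F) (hF' : DifferentiableAt ℝ (fderiv ℝ F) x) :
    HasFDerivAt (fderiv ℝ fun y => φ (F y))
      (φ' (F x) • fderiv ℝ (fderiv ℝ F) x + (φ'' • fderiv ℝ F x).smulRight (fderiv ℝ F x)) x := by
  have hD : fderiv ℝ (fun y => φ (F y)) = fun y => φ' (F y) • fderiv ℝ F y :=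
    funext fun y => ((hφ (F y)).comp_hasFDerivAt y (hF y).hasFDerivAt).fderiv
  rw [hD]
  exact (hφ'.comp_hasFDerivAt x (hF x).hasFDerivAt).smul hF'.hasFDerivAt

end NormedSpace

section InnerProductSpace

variable {E : Type*} [NormedAddCommGroup E] [InnerProductSpace ℝ E]

theorem inner_apply_self_eq_zero_of_skew {J : E →L[ℝ] E} (hJ : ∀ v w : E, ⟪J v, w⟫ = -⟪v, J w⟫)
    (v : E) : ⟪J v, v⟫ = 0 := by
  have h := hJ v v
  rw [real_inner_comm] at h ⊢
  linarith

variable [CompleteSpace E] {F : E → ℝ} {x : E}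

theorem gradient_comp_eq_smul {φ : ℝ → ℝ} {φ' : ℝ} (hφ : HasDerivAt φ φ' (F x))
    (hF : DifferentiableAt ℝ F x) :
    gradient (fun y => φ (F y)) x = φ' • gradient F x := by
  have h : HasFDerivAt (fun y => φ (F y)) (φ' • fderiv ℝ F x) x :=
    hφ.comp_hasFDerivAt x hF.hasFDerivAt
  rw [gradient, h.fderiv, map_smul, gradient]

theorem fderiv_fderiv_apply_self_le {M : ℝ}
    (hLip : ∀ w v : E, ‖gradient F w - gradient F v‖ ≤ M * ‖w - v‖) {e : E} (he : ‖e‖ = 1) :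
    fderiv ℝ (fderiv ℝ F) x e e ≤ M := by
  have hM : 0 ≤ M := by simpa [he] using (norm_nonneg _).trans (hLip e 0)
  have hD2 : ‖fderiv ℝ (fderiv ℝ F) x‖ ≤ M := by
    refine norm_fderiv_le_of_lip' ℝ hM (Filter.Eventually.of_forall fun y => ?_)
    rw [← toDual_gradient, ← toDual_gradient, ← map_sub, LinearIsometryEquiv.norm_map]
    exact hLip y x
  calc fderiv ℝ (fderiv ℝ F) x e e ≤ ‖fderiv ℝ (fderiv ℝ F) x‖ * ‖e‖ * ‖e‖ :=
        (le_abs_self _).trans ((fderiv ℝ (fderiv ℝ F) x).le_opNorm₂ e e)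
    _ ≤ M := by simpa [he] using hD2

end InnerProductSpace

section Euclidean

variable {d : ℕ} {F : EuclideanSpace ℝ (Fin d) → ℝ} {x : EuclideanSpace ℝ (Fin d)}

theorem laplacian_eq_sum_fderiv_fderiv (hF : DifferentiableAt ℝ (fderiv ℝ F) x) :
    laplacian F x = ∑ i, fderiv ℝ (fderiv ℝ F) x (EuclideanSpace.single i 1)
      (EuclideanSpace.single i 1) :=
  Finset.sum_congr rfl fun _ _ => fderiv_fun_fderiv_apply hF _ _

theorem sum_fderiv_single_sq :
    ∑ i, fderiv ℝ F x (EuclideanSpace.single i 1) ^ 2 = ‖gradient F x‖ ^ 2 := by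
  simp [← inner_gradient_left, EuclideanSpace.inner_single_right, EuclideanSpace.real_norm_sq_eq]

theorem laplacian_comp {φ φ' : ℝ → ℝ} {φ'' : ℝ}
    (hφ : ∀ t, HasDerivAt φ (φ' t) t) (hφ' : HasDerivAt φ' φ'' (F x))
    (hF : Differentiable ℝ F) (hF' : DifferentiableAt ℝ (fderiv ℝ F) x) :
    laplacian (fun y => φ (F y)) x = φ' (F x) * laplacian F x + φ'' * ‖gradient F x‖ ^ 2 := by
  have h := hasFDerivAt_fderiv_comp hφ hφ' hF hF'
  rw [laplacian_eq_sum_fderiv_fderiv h.differentiableAt, h.fderiv,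
    laplacian_eq_sum_fderiv_fderiv hF', ← sum_fderiv_single_sq, Finset.mul_sum, Finset.mul_sum,
    ← Finset.sum_add_distrib]
  simp [sq, mul_assoc]

theorem laplacian_le_mul_dim {M : ℝ}
    (hLip : ∀ w v : EuclideanSpace ℝ (Fin d), ‖gradient F w - gradient F v‖ ≤ M * ‖w - v‖)
    (hF : DifferentiableAt ℝ (fderiv ℝ F) x) :
    laplacian F x ≤ M * d := by
  rw [laplacian_eq_sum_fderiv_fderiv hF]
  calc _ ≤ ∑ _i : Fin d, M :=
        Finset.sum_le_sum fun _ _ => fderiv_fderiv_apply_self_le hLip (by simp)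
    _ = M * d := by simp [mul_comm]

end Euclidean

theorem generator_exp_upper_bound_general {d : ℕ} {F : EuclideanSpace ℝ (Fin d) → ℝ}
    {M α β : ℝ} (hF : ContDiff ℝ 2 F)
    (hLip : ∀ w v : EuclideanSpace ℝ (Fin d),
      ‖gradient F w - gradient F v‖ ≤ M * ‖w - v‖)
    (hα : 0 < α) (hαβ : α < β)
    (J : EuclideanSpace ℝ (Fin d) →L[ℝ] EuclideanSpace ℝ (Fin d))
    (hJ : ∀ v w : EuclideanSpace ℝ (Fin d), ⟪J v, w⟫ = -⟪v, J w⟫) :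
    ∀ x : EuclideanSpace ℝ (Fin d),
      -⟪(1 + J) (gradient F x), gradient (fun y => Real.exp (α * F y)) x⟫ +
          β⁻¹ * laplacian (fun y => Real.exp (α * F y)) x ≤
        α * β⁻¹ * M * d * Real.exp (α * F x) := by
  intro x
  have hexp : ∀ t, HasDerivAt (fun t => Real.exp (α * t)) (α * Real.exp (α * t)) t := fun t => by
    simpa [mul_comm] using ((hasDerivAt_id t).const_mul α).exp
  have hexp' : HasDerivAt (fun t => α * Real.exp (α * t)) (α ^ 2 * Real.exp (α * F x)) (F x) := by
    simpa [sq, mul_assoc] using (hexp (F x)).const_mul α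
  have hF₁ : Differentiable ℝ F := hF.differentiable (by norm_num)
  have hF₂ : DifferentiableAt ℝ (fderiv ℝ F) x :=
    (hF.fderiv_right (m := 1) le_rfl).differentiable one_ne_zero x
  have hΔ : laplacian F x ≤ M * d := laplacian_le_mul_dim hLip hF₂
  have hβ : 0 < β := hα.trans hαβ
  have hαβ' : α * β⁻¹ ≤ 1 := by rw [← div_eq_mul_inv, div_le_one hβ]; exact hαβ.le
  have hcoef : 0 ≤ α * (1 - α * β⁻¹) := mul_nonneg hα.le (sub_nonneg.2 hαβ')
  rw [gradient_comp_eq_smul (hexp _) (hF₁ x), laplacian_comp hexp hexp' hF₁ hF₂,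
    inner_smul_right, add_apply, one_apply_eq_self, inner_add_left,
    inner_apply_self_eq_zero_of_skew hJ, add_zero, real_inner_self_eq_norm_sq]
  set E := Real.exp (α * F x)
  calc _ = α * β⁻¹ * E * laplacian F x - α * (1 - α * β⁻¹) * E * ‖gradient F x‖ ^ 2 := by ring
    _ ≤ α * β⁻¹ * E * laplacian F x :=
        sub_le_self _ (mul_nonneg (mul_nonneg hcoef (Real.exp_pos _).le) (sq_nonneg _))
    _ ≤ α * β⁻¹ * E * (M * d) := by gcongr
    _ = α * β⁻¹ * M * d * E := by ring

/-- If `F` is C² with `M`-Lipschitz gradient and `β > α > 0`, then for the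
non-reversible Langevin generator with anti-symmetric `J`,
`L_J(e^{αF}) ≤ αβ⁻¹ M d · e^{αF}` pointwise. -/
theorem generator_exp_upper_bound {d : ℕ} {F : EuclideanSpace ℝ (Fin d) → ℝ}
    {M α β : ℝ} (hF : ContDiff ℝ 2 F) (hM : 0 ≤ M)
    (hLip : ∀ w v : EuclideanSpace ℝ (Fin d),
      ‖gradient F w - gradient F v‖ ≤ M * ‖w - v‖)
    (hα : 0 < α) (hαβ : α < β)
    (J : EuclideanSpace ℝ (Fin d) →L[ℝ] EuclideanSpace ℝ (Fin d))
    (hJ : ∀ v w : EuclideanSpace ℝ (Fin d), ⟪J v, w⟫ = -⟪v, J w⟫) :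
    ∀ x : EuclideanSpace ℝ (Fin d),
      -⟪(1 + J) (gradient F x), gradient (fun y => Real.exp (α * F y)) x⟫ +
          β⁻¹ * laplacian (fun y => Real.exp (α * F y)) x ≤
        α * β⁻¹ * M * d * Real.exp (α * F x) :=
  generator_exp_upper_bound_general hF hLip hα hαβ J hJ
end
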